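/- For every standard Sturmian sequence u over {0,1} there is a unique standard Sturmian sequence u' such that u = φ_b(u') or u = φ_β(u'), where φ_b: 0→0, 1→01 and φ_β: 0→10, 1→1. -/

import Mathlib

/-- Words over the binary alphabet `{0,1}`, represented as `ZMod 2`. -/
abbrev Word := List (ZMod 2)

/-- `m` is an occurrence of the word `w` in the sequence `s`. -/
def OccAt (s : ℕ → ZMod 2) (w : Word) (m : ℕ) : Prop :=
  w = List.ofFn fun i : Fin w.length => s (m + i)

/-- `w` is a factor of the sequence `s`. -/
def IsFactor (s : ℕ → ZMod 2) (w : Word) : Prop := ∃ m, OccAt s w m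

/-- Factor complexity of a sequence. -/
noncomputable def Cplx (s : ℕ → ZMod 2) (n : ℕ) : ℕ :=
  {w : Word | w.length = n ∧ IsFactor s w}.ncard

/-- A Sturmian sequence: factor complexity `n + 1` for all `n`. -/
def IsSturmian (s : ℕ → ZMod 2) : Prop := ∀ n, Cplx s n = n + 1

/-- Prepend a letter to an infinite sequence. -/
def consL (a : ZMod 2) (s : ℕ → ZMod 2) : ℕ → ZMod 2 :=
  fun n => match n with
  | 0 => a
  | k + 1 => s k

/-- A standard Sturmian sequence: both `0u` and `1u` are Sturmian. -/
def IsStandardSturmian (s : ℕ → ZMod 2) : Prop :=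
  IsSturmian (consL 0 s) ∧ IsSturmian (consL 1 s)

/-- The sequence `t` is the image of the sequence `s` under the substitution `φ`:
every prefix of `t` is a prefix of the `φ`-image of some prefix of `s`. -/
def SubstImage (φ : ZMod 2 → Word) (s t : ℕ → ZMod 2) : Prop :=
  ∀ n, ∃ k, (List.ofFn fun i : Fin n => t i) <+:
              ((List.ofFn fun i : Fin k => s i).flatMap φ)

/-- The morphism `φ_b : 0 → 0, 1 → 01`. -/
def phib (a : ZMod 2) : Word := if a = 0 then [0] else [0, 1]

/-- The morphism `φ_β : 0 → 10, 1 → 1`. -/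
def phibeta (a : ZMod 2) : Word := if a = 0 then [1, 0] else [1]

/-!
Let `u` be standard with `u 0 = 0`. Since `0u` is Sturmian and contains `00`, it cannot contain
`11`, so `u` is a concatenation of blocks `0` and `01`: `u = φ_b(u')`, where `u'` records the
letter following each `0`. Now `φ_b(0u') = 0u` and `φ_b(1u') = 01u`, and `01u` has the same
factors as `1u`: its new prefix `01u[0,n)` is the left extension of the left special factor
`1u[0,n)` of `u`, which cannot be `11…`. So `u'` is standard as soon as `φ_b`-preimages of
Sturmian sequences are Sturmian. For that, `w ↦ φ_b(w)0` maps right special factors of the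
preimage to right special factors of the image; those form a suffix chain, and `φ_b(w)0`
determines `w` among words of the same length, so there is at most one right special factor of
each length. There is at least one, since the complexity of the image is at most twice that of
the preimage (one length longer), hence the latter is unbounded.

Uniqueness: a `φ_b`-image determines its preimage letter by letter and starts with `0`, while a
`φ_β`-image starts with `1`. The case `u 0 = 1` is the mirror image under the exchange
`0 ↔ 1`, which swaps `φ_b` and `φ_β`.
-/

lemma zmod_two_cases (a : ZMod 2) : a = 0 ∨ a = 1 := by
  revert a; decide

def factorAt (s : ℕ → ZMod 2) (m n : ℕ) : Word := List.ofFn fun i : Fin n => s (m + i)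

@[simp] lemma length_factorAt (s : ℕ → ZMod 2) (m n : ℕ) : (factorAt s m n).length = n := by
  simp [factorAt]

lemma factorAt_add (s : ℕ → ZMod 2) (m n k : ℕ) :
    factorAt s m (n + k) = factorAt s m n ++ factorAt s (m + n) k := by
  simp [factorAt, List.ofFn_add, add_assoc]

lemma factorAt_succ (s : ℕ → ZMod 2) (m n : ℕ) :
    factorAt s m (n + 1) = factorAt s m n ++ [s (m + n)] := by
  rw [factorAt_add]; simp [factorAt]

lemma factorAt_succ' (s : ℕ → ZMod 2) (m n : ℕ) :
    factorAt s m (n + 1) = s m :: factorAt s (m + 1) n := by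
  simp [factorAt, List.ofFn_succ, add_assoc, add_comm 1]

@[simp] lemma factorAt_one (s : ℕ → ZMod 2) (m : ℕ) : factorAt s m 1 = [s m] := by
  simp [factorAt]

lemma ofFn_eq_factorAt (s : ℕ → ZMod 2) (n : ℕ) :
    (List.ofFn fun i : Fin n => s i) = factorAt s 0 n := by
  simp [factorAt]

lemma factorAt_prefix (s : ℕ → ZMod 2) (m : ℕ) {n k : ℕ} (h : n ≤ k) :
    factorAt s m n <+: factorAt s m k := by
  obtain ⟨d, rfl⟩ := Nat.exists_eq_add_of_le h
  rw [factorAt_add]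
  exact List.prefix_append _ _

section OccAt

variable {s : ℕ → ZMod 2} {w x y : Word} {m n : ℕ}

lemma occAt_iff_of_length (h : w.length = n) : OccAt s w m ↔ w = factorAt s m n := by
  subst h; rfl

lemma occAt_factorAt (s : ℕ → ZMod 2) (m n : ℕ) : OccAt s (factorAt s m n) m :=
  (occAt_iff_of_length (length_factorAt s m n)).2 rfl

lemma isFactor_factorAt (s : ℕ → ZMod 2) (m n : ℕ) : IsFactor s (factorAt s m n) :=
  ⟨m, occAt_factorAt s m n⟩

lemma occAt_append : OccAt s (x ++ y) m ↔ OccAt s x m ∧ OccAt s y (m + x.length) := by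
  rw [occAt_iff_of_length (List.length_append ..), factorAt_add, occAt_iff_of_length rfl,
    occAt_iff_of_length rfl]
  refine ⟨fun h => List.append_inj h (by simp), fun ⟨hx, hy⟩ => ?_⟩
  rw [← hx, ← hy]

lemma occAt_singleton {a : ZMod 2} : OccAt s [a] m ↔ s m = a := by
  simp [OccAt, eq_comm]

lemma occAt_cons {a : ZMod 2} : OccAt s (a :: w) m ↔ s m = a ∧ OccAt s w (m + 1) := by
  rw [← List.singleton_append, occAt_append, occAt_singleton, List.length_singleton]

lemma OccAt.infix (h : OccAt s (x ++ w ++ y) m) : OccAt s w (m + x.length) :=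
  (occAt_append.1 (occAt_append.1 h).1).2

lemma OccAt.prefix (hx : OccAt s x m) (hy : OccAt s y m) (h : x.length ≤ y.length) :
    x <+: y := by
  rw [occAt_iff_of_length rfl] at hx hy
  rw [hx, hy]
  exact factorAt_prefix s m h

lemma IsFactor.infix (h : IsFactor s x) (hw : w <:+: x) : IsFactor s w := by
  obtain ⟨m, hm⟩ := h
  obtain ⟨a, b, rfl⟩ := hw
  exact ⟨_, hm.infix⟩

lemma IsFactor.exists_append_singleton (h : IsFactor s w) : ∃ a, IsFactor s (w ++ [a]) := by
  obtain ⟨m, hm⟩ := h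
  exact ⟨s (m + w.length), m, occAt_append.2 ⟨hm, occAt_singleton.2 rfl⟩⟩

end OccAt

def factors (s : ℕ → ZMod 2) (n : ℕ) : Set Word := {w | w.length = n ∧ IsFactor s w}

def rightSpecial (s : ℕ → ZMod 2) (n : ℕ) : Set Word :=
  {w | w.length = n ∧ ∀ a, IsFactor s (w ++ [a])}

section Complexity

variable (s : ℕ → ZMod 2)

lemma cplx_eq_ncard (n : ℕ) : Cplx s n = (factors s n).ncard := rfl

lemma factors_finite (n : ℕ) : (factors s n).Finite :=
  (List.finite_length_eq _ n).subset fun _ h => h.1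

lemma rightSpecial_finite (n : ℕ) : (rightSpecial s n).Finite :=
  (List.finite_length_eq _ n).subset fun _ h => h.1

lemma cplx_zero : Cplx s 0 = 1 := by
  have : factors s 0 = {[]} := by
    ext w
    simpa [factors] using fun h : w = [] => h ▸ isFactor_factorAt s 0 0
  rw [cplx_eq_ncard, this, Set.ncard_singleton]

def rightExtensions (s : ℕ → ZMod 2) (n : ℕ) (a : ZMod 2) : Set Word :=
  {w | w.length = n ∧ IsFactor s (w ++ [a])}

lemma rightExtensions_finite (n : ℕ) (a : ZMod 2) : (rightExtensions s n a).Finite :=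
  (List.finite_length_eq _ n).subset fun _ h => h.1

lemma factors_succ (n : ℕ) : factors s (n + 1) =
    (· ++ [0]) '' rightExtensions s n 0 ∪ (· ++ [1]) '' rightExtensions s n 1 := by
  ext w
  refine ⟨fun ⟨hl, hw⟩ => ?_, ?_⟩
  · obtain rfl | ⟨v, a, rfl⟩ := List.eq_nil_or_concat w
    · simp at hl
    · simp only [List.concat_eq_append, List.length_append, List.length_singleton,
        Nat.add_right_cancel_iff] at hl hw ⊢
      rcases zmod_two_cases a with rfl | rfl
      exacts [.inl ⟨v, ⟨hl, hw⟩, rfl⟩, .inr ⟨v, ⟨hl, hw⟩, rfl⟩]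
  · rintro (⟨v, ⟨hl, hv⟩, rfl⟩ | ⟨v, ⟨hl, hv⟩, rfl⟩) <;> exact ⟨by simp [hl], hv⟩

lemma factors_eq_union (n : ℕ) :
    factors s n = rightExtensions s n 0 ∪ rightExtensions s n 1 := by
  ext w
  refine ⟨fun ⟨hl, hw⟩ => ?_, ?_⟩
  · obtain ⟨a, ha⟩ := hw.exists_append_singleton
    rcases zmod_two_cases a with rfl | rfl
    exacts [.inl ⟨hl, ha⟩, .inr ⟨hl, ha⟩]
  · rintro (⟨hl, hw⟩ | ⟨hl, hw⟩) <;> exact ⟨hl, hw.infix (List.prefix_append w _).isInfix⟩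

lemma rightSpecial_eq_inter (n : ℕ) :
    rightSpecial s n = rightExtensions s n 0 ∩ rightExtensions s n 1 := by
  ext w
  refine ⟨fun ⟨hl, hw⟩ => ⟨⟨hl, hw 0⟩, ⟨hl, hw 1⟩⟩, fun ⟨⟨hl, h0⟩, ⟨_, h1⟩⟩ => ⟨hl, fun a => ?_⟩⟩
  rcases zmod_two_cases a with rfl | rfl
  exacts [h0, h1]

lemma cplx_succ (n : ℕ) : Cplx s (n + 1) = Cplx s n + (rightSpecial s n).ncard := by
  have hdisj : Disjoint ((· ++ [0]) '' rightExtensions s n 0)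
      ((· ++ [1]) '' rightExtensions s n 1) := by
    rw [Set.disjoint_left]
    rintro _ ⟨v, -, rfl⟩ ⟨v', -, h⟩
    simpa using (List.append_inj' h rfl).2
  have hfin := rightExtensions_finite s n
  rw [cplx_eq_ncard, cplx_eq_ncard, factors_succ, factors_eq_union, rightSpecial_eq_inter,
    Set.ncard_union_eq hdisj ((hfin 0).image _) ((hfin 1).image _),
    Set.ncard_image_of_injective _ (List.append_left_injective _),
    Set.ncard_image_of_injective _ (List.append_left_injective _)]
  have := Set.ncard_union_add_ncard_inter _ _ (hfin 0) (hfin 1)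
  omega

lemma cplx_mono {m n : ℕ} (h : m ≤ n) : Cplx s m ≤ Cplx s n := by
  induction n, h using Nat.le_induction with
  | base => rfl
  | succ n _ ih => rw [cplx_succ]; omega

lemma isSturmian_iff : IsSturmian s ↔ ∀ n, (rightSpecial s n).ncard = 1 := by
  refine ⟨fun h n => ?_, fun h n => ?_⟩
  · have := cplx_succ s n
    rw [h, h] at this
    omega
  · induction n with
    | zero => exact cplx_zero s
    | succ n ih => rw [cplx_succ, ih, h]

variable {s}

lemma rightSpecial_drop {m n : ℕ} {w : Word} (hw : w ∈ rightSpecial s m) (h : n ≤ m) :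
    w.drop (m - n) ∈ rightSpecial s n := by
  refine ⟨by simp [hw.1]; omega, fun a => (hw.2 a).infix ?_⟩
  rw [← List.drop_append_of_le_length (by rw [hw.1]; omega)]
  exact (List.drop_suffix _ _).isInfix

lemma rightSpecial_nonempty_of_cplx_lt {m n : ℕ} (h : Cplx s n < Cplx s m) :
    (rightSpecial s n).Nonempty := by
  by_contra hne
  rw [Set.not_nonempty_iff_eq_empty] at hne
  have hconst (k : ℕ) : Cplx s (n + k) = Cplx s n := by
    induction k with
    | zero => rfl
    | succ k ih =>
      have : rightSpecial s (n + k) = ∅ := Set.eq_empty_of_forall_notMem fun w hw => by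
        simpa [hne] using rightSpecial_drop hw (Nat.le_add_right n k)
      rw [← add_assoc, cplx_succ, this, Set.ncard_empty, ih, add_zero]
  have := cplx_mono s (Nat.le_add_left m n)
  rw [hconst] at this
  omega

lemma cplx_le_of_eventually_eq {c : ZMod 2} {m₀ : ℕ} (hc : ∀ j ≥ m₀, s j = c) (n : ℕ) :
    Cplx s n ≤ m₀ + 1 := by
  have hconst {m : ℕ} (hm : m₀ ≤ m) : factorAt s m n = List.replicate n c := by
    refine List.eq_replicate_iff.2 ⟨length_factorAt .., ?_⟩
    simp only [factorAt, List.mem_ofFn]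
    rintro _ ⟨i, rfl⟩
    exact hc _ (by omega)
  have hsub : factors s n ⊆ (fun m => factorAt s m n) '' Set.Iic m₀ := by
    rintro w ⟨hl, m, hm⟩
    rw [occAt_iff_of_length hl] at hm
    refine ⟨min m m₀, min_le_right m m₀, ?_⟩
    rcases le_total m m₀ with h | h
    · simp [min_eq_left h, hm]
    · simp only [min_eq_right h, hm, hconst h, hconst le_rfl]
  calc Cplx s n ≤ _ := Set.ncard_le_ncard hsub ((Set.finite_Iic m₀).image _)
    _ ≤ (Set.Iic m₀).ncard := Set.ncard_image_le (Set.finite_Iic m₀)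
    _ = m₀ + 1 := Set.ncard_Iic_nat m₀

lemma IsSturmian.suffix_of_mem_rightSpecial (hs : IsSturmian s) {m n : ℕ} {v w : Word}
    (hv : v ∈ rightSpecial s m) (hw : w ∈ rightSpecial s n) (h : m ≤ n) : v <:+ w := by
  obtain ⟨x, hx⟩ := Set.ncard_eq_one.1 ((isSturmian_iff s).1 hs m)
  have hwx := rightSpecial_drop hw h
  rw [hx] at hv hwx
  rw [hv, ← hwx]
  exact List.drop_suffix _ _

lemma IsSturmian.exists_ne (hs : IsSturmian s) (m₀ : ℕ) (c : ZMod 2) : ∃ j ≥ m₀, s j ≠ c := by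
  by_contra! h
  have := cplx_le_of_eventually_eq h (m₀ + 1)
  rw [hs] at this
  omega

lemma IsSturmian.isFactor_pair (hs : IsSturmian s) {m : ℕ} {a b : ZMod 2} (hm : s m = a)
    (hab : b ≠ a) : IsFactor s [a, b] := by
  classical
  have hex : ∃ j, s (m + j + 1) ≠ a := by
    obtain ⟨j, hj, hne⟩ := hs.exists_ne (m + 1) a
    exact ⟨j - m - 1, by rwa [show m + (j - m - 1) + 1 = j by omega]⟩
  set j := Nat.find hex
  have hj : s (m + j) = a := by
    rcases hj : j with _ | i
    · exact hm
    · simpa [add_assoc] using Nat.find_min hex (show i < j by omega)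
  have hj' : s (m + j + 1) = b := by
    have : ∀ x a b : ZMod 2, x ≠ a → b ≠ a → x = b := by decide
    exact this _ _ _ (Nat.find_spec hex) hab
  exact ⟨m + j, occAt_cons.2 ⟨hj, occAt_singleton.2 hj'⟩⟩

lemma IsSturmian.not_isFactor_one_one (hs : IsSturmian s) (h00 : IsFactor s [0, 0]) :
    ¬ IsFactor s [1, 1] := by
  intro h11
  have hfirst {a : ZMod 2} (h : IsFactor s [a, a]) : ∃ m, s m = a := by
    obtain ⟨m, hm⟩ := h
    exact ⟨m, (occAt_cons.1 hm).1⟩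
  obtain ⟨m₀, hm₀⟩ := hfirst h00
  obtain ⟨m₁, hm₁⟩ := hfirst h11
  have hsub : ↑({[0, 0], [0, 1], [1, 0], [1, 1]} : Finset Word) ⊆ factors s 2 := by
    intro w hw
    simp only [Finset.coe_insert, Finset.coe_singleton, Set.mem_insert_iff,
      Set.mem_singleton_iff] at hw
    rcases hw with rfl | rfl | rfl | rfl
    exacts [⟨rfl, h00⟩, ⟨rfl, hs.isFactor_pair hm₀ (by decide)⟩,
      ⟨rfl, hs.isFactor_pair hm₁ (by decide)⟩, ⟨rfl, h11⟩]
  have := Set.ncard_le_ncard hsub (factors_finite s 2)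
  rw [Set.ncard_coe_finset, ← cplx_eq_ncard, hs] at this
  exact absurd this (by decide)

end Complexity

lemma cplx_congr {s t : ℕ → ZMod 2} (h : ∀ w, IsFactor s w ↔ IsFactor t w) (n : ℕ) :
    Cplx s n = Cplx t n := by
  simp only [Cplx, h]

section Standard

variable {s u : ℕ → ZMod 2} {w : Word} {a : ZMod 2}

lemma factorAt_consL_succ (m n : ℕ) : factorAt (consL a s) (m + 1) n = factorAt s m n := by
  simp [factorAt, consL, Nat.add_right_comm]

lemma occAt_consL_succ {m : ℕ} : OccAt (consL a s) w (m + 1) ↔ OccAt s w m := by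
  rw [occAt_iff_of_length rfl, occAt_iff_of_length rfl, factorAt_consL_succ]

lemma IsFactor.consL (h : IsFactor s w) (a : ZMod 2) : IsFactor (consL a s) w :=
  let ⟨m, hm⟩ := h
  ⟨m + 1, occAt_consL_succ.2 hm⟩

lemma isFactor_consL_iff : IsFactor (consL a s) w ↔ IsFactor s w ∨ OccAt (consL a s) w 0 := by
  refine ⟨?_, fun h => h.elim (·.consL a) (⟨0, ·⟩)⟩
  rintro ⟨_ | m, hm⟩
  exacts [.inr hm, .inl ⟨m, occAt_consL_succ.1 hm⟩]

lemma cplx_le_cplx_consL (n : ℕ) : Cplx s n ≤ Cplx (consL a s) n :=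
  Set.ncard_le_ncard (fun _ ⟨hl, hw⟩ => ⟨hl, hw.consL a⟩) (factors_finite _ n)

lemma cplx_consL_le (n : ℕ) : Cplx (consL a s) n ≤ Cplx s n + 1 := by
  have hsub : factors (consL a s) n ⊆ insert (factorAt (consL a s) 0 n) (factors s n) := by
    rintro w ⟨hl, hw⟩
    rcases isFactor_consL_iff.1 hw with hw | hw
    · exact .inr ⟨hl, hw⟩
    · exact .inl ((occAt_iff_of_length hl).1 hw)
  exact (Set.ncard_le_ncard hsub ((factors_finite s n).insert _)).trans (Set.ncard_insert_le _ _)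

lemma IsStandardSturmian.isSturmian_consL (hu : IsStandardSturmian u) (a : ZMod 2) :
    IsSturmian (consL a u) := by
  rcases zmod_two_cases a with rfl | rfl
  exacts [hu.1, hu.2]

lemma IsStandardSturmian.isSturmian (hu : IsStandardSturmian u) : IsSturmian u := by
  have hlo (n : ℕ) : n ≤ Cplx u n := by
    have := cplx_consL_le (s := u) (a := 0) n
    rw [hu.1] at this
    omega
  have hhi (n : ℕ) : Cplx u n ≤ n + 1 := hu.1 n ▸ cplx_le_cplx_consL n
  intro n
  induction n with
  | zero => exact cplx_zero u
  | succ n ih =>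
    have hrs := rightSpecial_nonempty_of_cplx_lt (s := u) (n := n) (m := n + 2)
      (by linarith [hhi n, hlo (n + 2)])
    have := (Set.ncard_pos (rightSpecial_finite u n)).2 hrs
    linarith [cplx_succ u n, hhi (n + 1)]

lemma IsStandardSturmian.isFactor_consL_iff (hu : IsStandardSturmian u) :
    IsFactor (consL a u) w ↔ IsFactor u w := by
  refine ⟨fun h => ?_, (·.consL a)⟩
  have heq : factors u w.length = factors (consL a u) w.length :=
    Set.eq_of_subset_of_ncard_le (fun _ ⟨hl, hv⟩ => ⟨hl, hv.consL a⟩)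
      (by rw [← cplx_eq_ncard, ← cplx_eq_ncard, hu.isSturmian, hu.isSturmian_consL])
      (factors_finite _ _)
  exact (heq.symm ▸ ⟨rfl, h⟩ : w ∈ factors u w.length).2

lemma IsStandardSturmian.isFactor_cons_factorAt (hu : IsStandardSturmian u) (a : ZMod 2)
    (n : ℕ) : IsFactor u (a :: factorAt u 0 n) :=
  hu.isFactor_consL_iff.1 ⟨0, occAt_cons.2 ⟨rfl, occAt_consL_succ.2 (occAt_factorAt u 0 n)⟩⟩

lemma IsStandardSturmian.exists_cons_isFactor (hu : IsStandardSturmian u) (h : IsFactor u w) :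
    ∃ b, IsFactor u (b :: w) := by
  obtain ⟨m, hm⟩ := h
  exact ⟨consL 0 u m, hu.isFactor_consL_iff.1 ⟨m, occAt_cons.2 ⟨rfl, occAt_consL_succ.2 hm⟩⟩⟩

lemma IsStandardSturmian.not_isFactor_one_one (hu : IsStandardSturmian u) (h0 : u 0 = 0) :
    ¬ IsFactor u [1, 1] := fun h11 =>
  (hu.isSturmian_consL 0).not_isFactor_one_one
    ⟨0, occAt_cons.2 ⟨rfl, occAt_consL_succ.2 (occAt_singleton.2 h0)⟩⟩ (h11.consL 0)

lemma IsStandardSturmian.isSturmian_consL_zero_consL_one (hu : IsStandardSturmian u)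
    (h0 : u 0 = 0) : IsSturmian (consL 0 (consL 1 u)) := by
  have hfac (w : Word) : IsFactor (consL 0 (consL 1 u)) w ↔ IsFactor (consL 1 u) w := by
    refine ⟨fun h => ?_, (·.consL 0)⟩
    rcases _root_.isFactor_consL_iff.1 h with h | h
    · exact h
    have hpre : w <+: 0 :: 1 :: factorAt u 0 w.length := h.prefix
      (by simp [occAt_cons, occAt_consL_succ, occAt_factorAt, consL]) (by simp; omega)
    obtain ⟨b, hb⟩ := hu.exists_cons_isFactor (hu.isFactor_cons_factorAt 1 w.length)
    rcases zmod_two_cases b with rfl | rfl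
    · exact (hu.isFactor_consL_iff.2 hb).infix hpre.isInfix
    · exact absurd (hb.infix (List.prefix_append [1, 1] _).isInfix) (hu.not_isFactor_one_one h0)
  intro n
  rw [cplx_congr hfac, hu.2]

end Standard

section Substitution

variable {φ : ZMod 2 → Word} {s t : ℕ → ZMod 2}

def imagePos (φ : ZMod 2 → Word) (t : ℕ → ZMod 2) (n : ℕ) : ℕ :=
  ((factorAt t 0 n).flatMap φ).length

@[simp] lemma imagePos_zero : imagePos φ t 0 = 0 := by
  simp [imagePos, factorAt]

lemma imagePos_succ (n : ℕ) : imagePos φ t (n + 1) = imagePos φ t n + (φ (t n)).length := by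
  simp [imagePos, factorAt_succ]

lemma length_le_length_flatMap (hφ : ∀ a, φ a ≠ []) (w : Word) :
    w.length ≤ (w.flatMap φ).length := by
  induction w with
  | nil => simp
  | cons a w ih =>
    have := List.length_pos_of_ne_nil (hφ a)
    simp only [List.flatMap_cons, List.length_append, List.length_cons]
    omega

lemma exists_imagePos_le_lt (hφ : ∀ a, φ a ≠ []) (i : ℕ) :
    ∃ j, imagePos φ t j ≤ i ∧ i < imagePos φ t (j + 1) := by
  have hpos (j : ℕ) := List.length_pos_of_ne_nil (hφ (t j))
  induction i with
  | zero => exact ⟨0, by simp, by simpa [imagePos_succ] using hpos 0⟩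
  | succ i ih =>
    obtain ⟨j, hj, hij⟩ := ih
    by_cases h : i + 1 < imagePos φ t (j + 1)
    · exact ⟨j, by omega, h⟩
    · exact ⟨j + 1, by omega, by rw [imagePos_succ]; linarith [hpos (j + 1)]⟩

lemma substImage_iff (hφ : ∀ a, φ a ≠ []) :
    SubstImage φ t s ↔ ∀ n, OccAt s ((factorAt t 0 n).flatMap φ) 0 := by
  simp only [SubstImage, ofFn_eq_factorAt]
  refine ⟨fun h n => ?_, fun h n => ⟨n, ?_⟩⟩
  · set x := (factorAt t 0 n).flatMap φ
    obtain ⟨k, hk⟩ := h x.length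
    have hx : x <+: (factorAt t 0 (max n k)).flatMap φ :=
      (factorAt_prefix t 0 (le_max_left n k)).flatMap φ
    have hk' := hk.trans ((factorAt_prefix t 0 (le_max_right n k)).flatMap φ)
    rw [occAt_iff_of_length rfl]
    exact ((List.prefix_of_prefix_length_le hk' hx (by simp)).eq_of_length (by simp)).symm
  · have hn : n ≤ imagePos φ t n :=
      (length_factorAt t 0 n).symm.trans_le (length_le_length_flatMap hφ _)
    rw [(occAt_iff_of_length rfl).1 (h n)]
    exact factorAt_prefix s 0 hn

lemma SubstImage.occAt_flatMap (h : SubstImage φ t s) (hφ : ∀ a, φ a ≠ []) (j n : ℕ) :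
    OccAt s ((factorAt t j n).flatMap φ) (imagePos φ t j) := by
  have := (substImage_iff hφ).1 h (j + n)
  rw [factorAt_add, List.flatMap_append, occAt_append] at this
  simpa only [zero_add, imagePos] using this.2

lemma SubstImage.isFactor_flatMap (h : SubstImage φ t s) (hφ : ∀ a, φ a ≠ []) {w : Word}
    (hw : IsFactor t w) : IsFactor s (w.flatMap φ) := by
  obtain ⟨j, hj⟩ := hw
  rw [occAt_iff_of_length rfl] at hj
  exact hj ▸ ⟨_, h.occAt_flatMap hφ j w.length⟩

lemma SubstImage.factorAt_eq_take_drop (h : SubstImage φ t s) (hφ : ∀ a, φ a ≠ []) (i n : ℕ) :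
    ∃ j, i - imagePos φ t j < (φ (t j)).length ∧
      factorAt s i n = (((factorAt t j (n + 1)).flatMap φ).drop (i - imagePos φ t j)).take n := by
  obtain ⟨j, hj, hij⟩ := exists_imagePos_le_lt (t := t) hφ i
  rw [imagePos_succ] at hij
  refine ⟨j, by omega, ?_⟩
  have hocc := h.occAt_flatMap hφ j (n + 1)
  set x := (factorAt t j (n + 1)).flatMap φ with hxdef
  have hx : (φ (t j)).length + n ≤ x.length := by
    have := length_le_length_flatMap hφ (factorAt t (j + 1) n)
    rw [length_factorAt] at this
    rw [hxdef, factorAt_succ', List.flatMap_cons, List.length_append]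
    omega
  rw [← List.take_append_drop (i - imagePos φ t j) x,
    ← List.take_append_drop n (x.drop _), ← List.append_assoc] at hocc
  replace hocc := hocc.infix
  rw [List.length_take_of_le (by omega), Nat.add_sub_cancel' hj,
    occAt_iff_of_length (n := n) (by simp only [List.length_take, List.length_drop]; omega)]
    at hocc
  exact hocc.symm

lemma SubstImage.cplx_le (h : SubstImage φ t s) (hφ : ∀ a, φ a ≠ []) {L : ℕ}
    (hL : ∀ a, (φ a).length ≤ L) (n : ℕ) : Cplx s n ≤ L * Cplx t (n + 1) := by
  let cut (p : ℕ × Word) : Word := ((p.2.flatMap φ).drop p.1).take n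
  have hfin := (Set.finite_Iio L).prod (factors_finite t (n + 1))
  have hsub : factors s n ⊆ cut '' (Set.Iio L ×ˢ factors t (n + 1)) := by
    rintro w ⟨hl, i, hi⟩
    obtain ⟨j, hj, hw⟩ := h.factorAt_eq_take_drop hφ i n
    rw [occAt_iff_of_length hl, hw] at hi
    exact ⟨(_, _), ⟨Set.mem_Iio.2 (hj.trans_le (hL (t j))), length_factorAt ..,
      isFactor_factorAt ..⟩, hi.symm⟩
  calc Cplx s n ≤ _ := Set.ncard_le_ncard hsub (hfin.image _)
    _ ≤ (Set.Iio L ×ˢ factors t (n + 1)).ncard := Set.ncard_image_le hfin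
    _ = L * Cplx t (n + 1) := by rw [Set.ncard_prod, Set.ncard_Iio_nat, cplx_eq_ncard]

lemma SubstImage.consL {s' : ℕ → ZMod 2} {a : ZMod 2}
    (h : SubstImage φ t s) (hφ : ∀ a, φ a ≠ []) (hs' : ∀ w, OccAt s w 0 → OccAt s' (φ a ++ w) 0) :
    SubstImage φ (consL a t) s' := by
  rw [substImage_iff hφ] at h ⊢
  rintro (_ | n)
  · exact occAt_factorAt s' 0 0
  · rw [factorAt_succ', List.flatMap_cons, factorAt_consL_succ]
    exact hs' _ (h n)

end Substitution

section Phib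

variable {s t : ℕ → ZMod 2}

@[simp] lemma phib_zero : phib 0 = [0] := rfl

@[simp] lemma phib_one : phib 1 = [0, 1] := rfl

lemma phib_ne_nil (a : ZMod 2) : phib a ≠ [] := by
  rcases zmod_two_cases a with rfl | rfl <;> simp

lemma length_phib_le (a : ZMod 2) : (phib a).length ≤ 2 := by
  rcases zmod_two_cases a with rfl | rfl <;> simp

lemma exists_phib_eq_cons (a : ZMod 2) : ∃ r, phib a = 0 :: r := by
  rcases zmod_two_cases a with rfl | rfl <;> simp

lemma count_flatMap_phib (w : Word) : (w.flatMap phib).count 0 = w.length := by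
  induction w with
  | nil => rfl
  | cons a w ih => rcases zmod_two_cases a with rfl | rfl <;> simp [ih]

lemma flatMap_phib_ne_one_cons (w r : Word) : w.flatMap phib ≠ 1 :: r := by
  rcases w with _ | ⟨a, w⟩
  · simp
  · obtain ⟨r', hr'⟩ := exists_phib_eq_cons a
    simp [hr']

lemma flatMap_phib_injective : Function.Injective (List.flatMap phib) := by
  intro v
  induction v with
  | nil => rintro (_ | ⟨b, w⟩) h <;> simp_all [phib_ne_nil]
  | cons a v ih =>
    rintro (_ | ⟨b, w⟩) h
    · simp [phib_ne_nil] at h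
    rcases zmod_two_cases a with rfl | rfl <;> rcases zmod_two_cases b with rfl | rfl <;>
      simp only [List.flatMap_cons, phib_zero, phib_one, List.cons_append, List.nil_append,
        List.cons.injEq, true_and] at h
    · rw [ih h]
    · exact absurd h (flatMap_phib_ne_one_cons _ _)
    · exact absurd h.symm (flatMap_phib_ne_one_cons _ _)
    · rw [ih h]

lemma eq_of_flatMap_phib_append_zero_suffix {v w : Word} (hl : v.length = w.length)
    (h : v.flatMap phib ++ [0] <:+ w.flatMap phib ++ [0]) : v = w := by
  obtain ⟨x, hx⟩ := h
  rw [← List.append_assoc, List.append_left_inj] at hx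
  have hx0 : x.count 0 = 0 := by
    have := congrArg (List.count 0) hx
    rw [List.count_append, count_flatMap_phib, count_flatMap_phib, hl] at this
    omega
  rcases x with _ | ⟨c, x⟩
  · exact flatMap_phib_injective hx
  · have hc : c = 1 := by
      rcases zmod_two_cases c with rfl | rfl
      · simp at hx0
      · rfl
    exact absurd hx.symm (hc ▸ flatMap_phib_ne_one_cons _ _)

lemma SubstImage.flatMap_phib_append_zero_mem_rightSpecial (h : SubstImage phib t s) {n : ℕ}
    {w : Word} (hw : w ∈ rightSpecial t n) :
    w.flatMap phib ++ [0] ∈ rightSpecial s ((w.flatMap phib).length + 1) := by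
  refine ⟨by simp, fun a => ?_⟩
  rcases zmod_two_cases a with rfl | rfl
  · obtain ⟨c, hc⟩ := (hw.2 0).exists_append_singleton
    obtain ⟨r, hr⟩ := exists_phib_eq_cons c
    refine (h.isFactor_flatMap phib_ne_nil hc).infix (List.IsPrefix.isInfix ⟨r, ?_⟩)
    simp [hr]
  · simpa using h.isFactor_flatMap phib_ne_nil (hw.2 1)

lemma SubstImage.isSturmian_of_phib (h : SubstImage phib t s) (hs : IsSturmian s) :
    IsSturmian t := by
  refine (isSturmian_iff t).2 fun n => ?_
  have hsub : (rightSpecial t n).Subsingleton := by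
    intro v hv w hw
    have hl : v.length = w.length := hv.1.trans hw.1.symm
    have hv' := h.flatMap_phib_append_zero_mem_rightSpecial hv
    have hw' := h.flatMap_phib_append_zero_mem_rightSpecial hw
    rcases le_total ((v.flatMap phib).length + 1) ((w.flatMap phib).length + 1) with hle | hle
    · exact eq_of_flatMap_phib_append_zero_suffix hl (hs.suffix_of_mem_rightSpecial hv' hw' hle)
    · exact (eq_of_flatMap_phib_append_zero_suffix hl.symm
        (hs.suffix_of_mem_rightSpecial hw' hv' hle)).symm
  have hne : (rightSpecial t n).Nonempty := by
    apply rightSpecial_nonempty_of_cplx_lt (m := 2 * Cplx t n + 1 + 1)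
    have := h.cplx_le phib_ne_nil length_phib_le (2 * Cplx t n + 1)
    rw [hs] at this
    omega
  obtain ⟨w, hw⟩ := hne
  rw [hsub.eq_singleton_of_mem hw, Set.ncard_singleton]

lemma SubstImage.apply_imagePos_phib (h : SubstImage phib t s) (n : ℕ) :
    s (imagePos phib t n) = 0 := by
  have := h.occAt_flatMap phib_ne_nil n 1
  obtain ⟨r, hr⟩ := exists_phib_eq_cons (t n)
  rw [factorAt_one, List.flatMap_singleton, hr] at this
  exact (occAt_cons.1 this).1

lemma SubstImage.phib_apply (h : SubstImage phib t s) (n : ℕ) :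
    t n = s (imagePos phib t n + 1) := by
  rcases zmod_two_cases (t n) with ht | ht
  · have := h.apply_imagePos_phib (n + 1)
    rw [imagePos_succ, ht, phib_zero] at this
    rw [ht, ← this]
    rfl
  · have := h.occAt_flatMap phib_ne_nil n 1
    rw [factorAt_one, List.flatMap_singleton, ht, phib_one, occAt_cons, occAt_singleton] at this
    rw [ht, this.2]

lemma SubstImage.phib_injective {v w : ℕ → ZMod 2} (hv : SubstImage phib v s)
    (hw : SubstImage phib w s) : v = w := by
  have key (n : ℕ) : imagePos phib v n = imagePos phib w n ∧ v n = w n := by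
    induction n with
    | zero => simp [hv.phib_apply 0, hw.phib_apply 0]
    | succ n ih =>
      have hpos : imagePos phib v (n + 1) = imagePos phib w (n + 1) := by
        rw [imagePos_succ, imagePos_succ, ih.1, ih.2]
      exact ⟨hpos, by rw [hv.phib_apply, hw.phib_apply, hpos]⟩
  funext n
  exact (key n).2

end Phib

section Desubstitution

variable {u : ℕ → ZMod 2}

-- The start of the `n`-th block when `u` is cut into blocks `0` and `01`.
def zeroPos (u : ℕ → ZMod 2) : ℕ → ℕ
  | 0 => 0
  | n + 1 => zeroPos u n + (phib (u (zeroPos u n + 1))).length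

def desubst (u : ℕ → ZMod 2) (n : ℕ) : ZMod 2 := u (zeroPos u n + 1)

lemma apply_zeroPos (h0 : u 0 = 0) (h11 : ¬ IsFactor u [1, 1]) (n : ℕ) : u (zeroPos u n) = 0 := by
  induction n with
  | zero => exact h0
  | succ n ih =>
    rw [zeroPos]
    rcases zmod_two_cases (u (zeroPos u n + 1)) with h | h
    · rwa [h]
    · rw [h, phib_one]
      by_contra hne
      have : ∀ x : ZMod 2, x ≠ 0 → x = 1 := by decide
      exact h11 ⟨zeroPos u n + 1, occAt_cons.2 ⟨h, occAt_singleton.2 (this _ hne)⟩⟩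

lemma occAt_phib_desubst (h0 : u 0 = 0) (h11 : ¬ IsFactor u [1, 1]) (n : ℕ) :
    OccAt u (phib (desubst u n)) (zeroPos u n) := by
  have hz := apply_zeroPos h0 h11 n
  rcases zmod_two_cases (desubst u n) with h | h
  · rw [h, phib_zero, occAt_singleton, hz]
  · rw [h, phib_one, occAt_cons, occAt_singleton]
    exact ⟨hz, h⟩

lemma substImage_phib_desubst (h0 : u 0 = 0) (h11 : ¬ IsFactor u [1, 1]) :
    SubstImage phib (desubst u) u := by
  suffices h : ∀ n, OccAt u ((factorAt (desubst u) 0 n).flatMap phib) 0 ∧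
      imagePos phib (desubst u) n = zeroPos u n from
    (substImage_iff phib_ne_nil).2 fun n => (h n).1
  intro n
  induction n with
  | zero => exact ⟨occAt_factorAt u 0 0, rfl⟩
  | succ n ih =>
    refine ⟨?_, by rw [imagePos_succ, ih.2]; rfl⟩
    have hpos : ((factorAt (desubst u) 0 n).flatMap phib).length = zeroPos u n := ih.2
    rw [factorAt_succ, List.flatMap_append, occAt_append]
    simp only [zero_add, hpos, List.flatMap_singleton]
    exact ⟨ih.1, occAt_phib_desubst h0 h11 n⟩

lemma IsStandardSturmian.desubst (hu : IsStandardSturmian u) (h0 : u 0 = 0) :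
    IsStandardSturmian (desubst u) := by
  have hd := substImage_phib_desubst h0 (hu.not_isFactor_one_one h0)
  refine ⟨(hd.consL phib_ne_nil fun w hw => ?_).isSturmian_of_phib hu.1,
    (hd.consL phib_ne_nil fun w hw => ?_).isSturmian_of_phib
      (hu.isSturmian_consL_zero_consL_one h0)⟩
  · simpa [occAt_cons, occAt_consL_succ, consL] using hw
  · simpa [occAt_cons, occAt_consL_succ, consL] using hw

end Desubstitution

section Exchange

variable {s t : ℕ → ZMod 2}

def exch (s : ℕ → ZMod 2) (n : ℕ) : ZMod 2 := s n + 1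

lemma add_one_involutive : Function.Involutive (· + (1 : ZMod 2)) := by
  intro a
  revert a
  decide

lemma exch_involutive : Function.Involutive exch := fun s =>
  funext fun n => add_one_involutive (s n)

lemma map_add_one_involutive : Function.Involutive (List.map (· + (1 : ZMod 2))) := fun w => by
  rw [List.map_map, add_one_involutive.comp_self, List.map_id]

lemma factorAt_exch (m n : ℕ) : factorAt (exch s) m n = (factorAt s m n).map (· + 1) := by
  simp [factorAt, exch, List.map_ofFn, Function.comp_def]

lemma occAt_exch {w : Word} {m : ℕ} : OccAt (exch s) w m ↔ OccAt s (w.map (· + 1)) m := by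
  rw [occAt_iff_of_length rfl, occAt_iff_of_length (List.length_map _), factorAt_exch]
  generalize factorAt s m w.length = x
  exact ⟨fun h => h ▸ map_add_one_involutive x, fun h => h ▸ (map_add_one_involutive w).symm⟩

lemma cplx_exch (n : ℕ) : Cplx (exch s) n = Cplx s n := by
  have hmap := map_add_one_involutive
  have : factors (exch s) n = List.map (· + 1) '' factors s n := by
    rw [hmap.image_eq_preimage_symm]
    ext w
    simp [factors, IsFactor, occAt_exch]
  rw [cplx_eq_ncard, this, Set.ncard_image_of_injective _ hmap.injective, cplx_eq_ncard]

lemma IsSturmian.exch (hs : IsSturmian s) : IsSturmian (exch s) := fun n =>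
  (cplx_exch n).trans (hs n)

lemma consL_exch (a : ZMod 2) (s : ℕ → ZMod 2) : consL (a + 1) (exch s) = exch (consL a s) := by
  funext n
  cases n <;> rfl

lemma IsStandardSturmian.exch (hs : IsStandardSturmian s) : IsStandardSturmian (exch s) :=
  ⟨consL_exch 1 s ▸ hs.2.exch, consL_exch 0 s ▸ hs.1.exch⟩

lemma SubstImage.exch {φ ψ : ZMod 2 → Word} (h : SubstImage φ t s)
    (hφψ : ∀ a, (φ a).map (· + 1) = ψ (a + 1)) : SubstImage ψ (exch t) (exch s) := by
  intro n
  obtain ⟨k, hk⟩ := h n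
  refine ⟨k, ?_⟩
  have hmap := hk.map (· + 1)
  rw [List.map_flatMap] at hmap
  simp only [hφψ] at hmap
  rw [← List.flatMap_map (· + 1) ψ, List.map_ofFn, List.map_ofFn] at hmap
  exact hmap

lemma map_phib : ∀ a, (phib a).map (· + 1) = phibeta (a + 1) := by decide

lemma map_phibeta : ∀ a, (phibeta a).map (· + 1) = phib (a + 1) := by decide

end Exchange

/-- for every standard Sturmian sequence `u` there is a unique standard
Sturmian sequence `u'` with `u = φ_b(u')` or `u = φ_β(u')`. -/
theorem standard_desubstitution (u : ℕ → ZMod 2) (hu : IsStandardSturmian u) :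
    ∃! u' : ℕ → ZMod 2, IsStandardSturmian u' ∧
      (SubstImage phib u' u ∨ SubstImage phibeta u' u) := by
  have hexch {u v : ℕ → ZMod 2}
      (h : IsStandardSturmian v ∧ (SubstImage phib v u ∨ SubstImage phibeta v u)) :
      IsStandardSturmian (exch v) ∧
        (SubstImage phib (exch v) (exch u) ∨ SubstImage phibeta (exch v) (exch u)) :=
    ⟨h.1.exch, h.2.symm.imp (·.exch map_phibeta) (·.exch map_phib)⟩
  wlog h0 : u 0 = 0 generalizing u
  · have h0' : exch u 0 = 0 := by
      have : ∀ a : ZMod 2, a ≠ 0 → a + 1 = 0 := by decide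
      exact this _ h0
    refine (exch_involutive.toPerm.existsUnique_congr fun v => ⟨hexch, fun h => ?_⟩).2
      (this (exch u) hu.exch h0')
    simpa only [Function.Involutive.coe_toPerm, exch_involutive _] using hexch h
  have hsub := substImage_phib_desubst h0 (hu.not_isFactor_one_one h0)
  refine ⟨desubst u, ⟨hu.desubst h0, .inl hsub⟩, fun v ⟨_, hv⟩ => hv.elim (·.phib_injective hsub) ?_⟩
  intro hv
  have := (hv.exch map_phibeta).apply_imagePos_phib 0
  simp [exch, h0] at this
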